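/- Scaling and squaring enclosure theorem: let [A] be an interval matrix and K, L ∈ ℕ with (K+2)·2^L > ‖[A]‖. Then for every A ∈ [A], exp(A) belongs to [S]([A],L,K) := ([H]([A]/2^L, K))^{2^L}, where [H] is the Horner interval enclosure of the exponential with remainder, and the power 2^L is computed by L successive interval matrix squarings. -/

import Mathlib

open Pointwise

attribute [local instance] Matrix.linftyOpNormedRing Matrix.linftyOpNormedAlgebra

/-- The matrix exponential, defined by its power series. -/
noncomputable def expM {n : ℕ} (A : Matrix (Fin n) (Fin n) ℝ) : Matrix (Fin n) (Fin n) ℝ :=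
  ∑' k : ℕ, (k.factorial : ℝ)⁻¹ • A ^ k

/-- The truncation error bound `ρ(α,K) = α^(K+1) / ((K+1)!·(1 − α/(K+2)))`. -/
noncomputable def rho (α : ℝ) (K : ℕ) : ℝ :=
  α ^ (K + 1) / ((K + 1).factorial * (1 - α / (K + 2)))

/-- An interval matrix, given entrywise by subsets (intervals) of `ℝ`. -/
abbrev IMat (n : ℕ) := Matrix (Fin n) (Fin n) (Set ℝ)

/-- The interval matrix `[A̲, Ā]` with entries `[a̲_{ij}, ā_{ij}]`. -/
def ofBounds {n : ℕ} (lo hi : Matrix (Fin n) (Fin n) ℝ) : IMat n :=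
  fun i j => Set.Icc (lo i j) (hi i j)

/-- Membership of a real matrix in an interval matrix (entrywise membership). -/
def memI {n : ℕ} (M : Matrix (Fin n) (Fin n) ℝ) (A : IMat n) : Prop :=
  ∀ i j, M i j ∈ A i j

/-- Entrywise interval matrix addition (setwise interval addition). -/
def iadd {n : ℕ} (A B : IMat n) : IMat n := fun i j => A i j + B i j

/-- Scalar multiple of an interval matrix (setwise). -/
def ismul {n : ℕ} (c : ℝ) (A : IMat n) : IMat n := fun i j => c • A i j

/-- Interval matrix product: `([A][B])_{ij} = ∑ₖ [a_{ik}]·[b_{kj}]`, where interval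
products are setwise and sums are Minkowski sums (interval arithmetic). -/
def imul {n : ℕ} (A B : IMat n) : IMat n :=
  fun i j => ∑ k : Fin n, Set.image2 (· * ·) (A i k) (B k j)

/-- The degenerate (point) interval identity matrix. -/
def iId (n : ℕ) : IMat n := fun i j => {(1 : Matrix (Fin n) (Fin n) ℝ) i j}

/-- Interval Horner scheme: `ihornerP [A] K K` is the interval evaluation of
`I + [A](I + ([A]/2)(I + ([A]/3)(⋯(I + [A]/K)⋯))))`. -/
def ihornerP {n : ℕ} (A : IMat n) (K : ℕ) : ℕ → IMat n
  | 0 => iId n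
  | m + 1 => iadd (iId n) (ismul ((K - m : ℕ) : ℝ)⁻¹ (imul A (ihornerP A K m)))

/-- The norm of an interval matrix: `‖[A]‖ = sup{‖A‖_∞ : A ∈ [A]}`. -/
noncomputable def intervalNorm {n : ℕ} (lo hi : Matrix (Fin n) (Fin n) ℝ) : ℝ :=
  sSup ((fun M => ‖M‖) '' {A : Matrix (Fin n) (Fin n) ℝ | ∀ i j, A i j ∈ Set.Icc (lo i j) (hi i j)})

/-- The Horner enclosure with remainder, `[H]([B],K)`, for `[B] = [B̲, B̄]`. -/
noncomputable def ihorner {n : ℕ} (Blo Bhi : Matrix (Fin n) (Fin n) ℝ) (K : ℕ) : IMat n :=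
  iadd (ihornerP (ofBounds Blo Bhi) K K)
    (fun _ _ => rho (intervalNorm Blo Bhi) K • Set.Icc (-1 : ℝ) 1)

/-!
Writing `exp A = (exp (2⁻ᴸ A))^(2^L)`, it suffices to enclose `exp B` for every `B` in the scaled
interval matrix `[A]/2^L` and then to square `L` times, since interval multiplication encloses
all products of members. The interval Horner scheme encloses the pointwise Horner scheme, which
evaluates the Taylor polynomial of degree `K`; its tail is dominated by the geometric series
`‖B‖^(K+1)/(K+1)! · ∑ (‖B‖/(K+2))^k`, which sums to `ρ(‖B‖, K) ≤ ρ(‖[A]/2^L‖, K)`,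
and `‖[A]/2^L‖ = ‖[A]‖/2^L < K + 2`.
-/

open scoped Nat

section Horner

variable {𝔸 : Type*} [Ring 𝔸] [Algebra ℝ 𝔸]

noncomputable def hornerP (B : 𝔸) (K : ℕ) : ℕ → 𝔸
  | 0 => 1
  | m + 1 => 1 + ((K - m : ℕ) : ℝ)⁻¹ • (B * hornerP B K m)

theorem hornerP_add_eq_sum (B : 𝔸) (d m : ℕ) :
    hornerP B (d + m) m = ∑ j ∈ Finset.range (m + 1), ((d ! : ℝ) / (d + j)!) • B ^ j := by
  induction m generalizing d with
  | zero => simp [hornerP, div_self (Nat.cast_ne_zero.2 (Nat.factorial_ne_zero d) : (d ! : ℝ) ≠ 0)]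
  | succ m ih =>
    have hcoef : ∀ j : ℕ, ((d + 1 : ℕ) : ℝ)⁻¹ * (((d + 1)! : ℝ) / (d + 1 + j)!)
        = (d ! : ℝ) / (d + (j + 1))! := by
      intro j
      rw [Nat.factorial_succ, show d + 1 + j = d + (j + 1) by ring]
      push_cast
      field_simp
    rw [hornerP, show d + (m + 1) = d + 1 + m by ring, Nat.add_sub_cancel, ih,
      Finset.sum_range_succ' _ (m + 1), Finset.mul_sum, Finset.smul_sum, add_comm]
    congr 1
    · refine Finset.sum_congr rfl fun j _ => ?_
      rw [mul_smul_comm, smul_smul, hcoef, pow_succ']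
    · simp [div_self (Nat.cast_ne_zero.2 (Nat.factorial_ne_zero d) : (d ! : ℝ) ≠ 0)]

theorem hornerP_self (B : 𝔸) (K : ℕ) :
    hornerP B K K = ∑ j ∈ Finset.range (K + 1), (j ! : ℝ)⁻¹ • B ^ j := by
  simpa using hornerP_add_eq_sum B 0 K

end Horner

section TaylorRemainder

variable {𝔸 : Type*} [NormedRing 𝔸] [NormedAlgebra ℝ 𝔸]

theorem norm_expSeries_tail_term_le (x : 𝔸) (K k : ℕ) :
    ‖((k + (K + 1))! : ℝ)⁻¹ • x ^ (k + (K + 1))‖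
      ≤ ‖x‖ ^ (K + 1) / (K + 1)! * (‖x‖ / (K + 2)) ^ k := by
  have hfact : ((K + 1)! : ℝ) * ((K : ℝ) + 2) ^ k ≤ (k + (K + 1))! := by
    have h := Nat.factorial_mul_pow_le_factorial (m := K + 1) (n := k)
    rw [add_comm (K + 1) k] at h
    exact_mod_cast h
  rw [norm_smul, Real.norm_of_nonneg (by positivity), inv_mul_eq_div]
  calc ‖x ^ (k + (K + 1))‖ / (k + (K + 1))!
      ≤ ‖x‖ ^ (k + (K + 1)) / (k + (K + 1))! := by
        gcongr
        exact norm_pow_le' x (by omega)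
    _ ≤ ‖x‖ ^ (k + (K + 1)) / ((K + 1)! * ((K : ℝ) + 2) ^ k) := by gcongr
    _ = ‖x‖ ^ (K + 1) / (K + 1)! * (‖x‖ / (K + 2)) ^ k := by
        rw [div_pow, div_mul_div_comm, ← pow_add, add_comm (K + 1) k]

theorem norm_exp_sub_taylor_le [CompleteSpace 𝔸] (x : 𝔸) {K : ℕ} (hx : ‖x‖ < K + 2) :
    ‖NormedSpace.exp x - ∑ j ∈ Finset.range (K + 1), (j ! : ℝ)⁻¹ • x ^ j‖ ≤ rho ‖x‖ K := by
  set r := ‖x‖ / (K + 2) with hr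
  have hr0 : 0 ≤ r := by positivity
  have hr1 : r < 1 := (div_lt_one (by positivity)).2 hx
  have htail := (hasSum_nat_add_iff' (K + 1)).2 (NormedSpace.exp_series_hasSum_exp' (𝕂 := ℝ) x)
  have hgeom := (hasSum_geometric_of_lt_one hr0 hr1).mul_left (‖x‖ ^ (K + 1) / (K + 1)!)
  refine (htail.norm_le_of_bounded hgeom (norm_expSeries_tail_term_le x K)).trans_eq ?_
  rw [rho, ← hr, div_mul_eq_div_div, div_eq_mul_inv (‖x‖ ^ (K + 1) / _)]

end TaylorRemainder

theorem rho_monotoneOn (K : ℕ) : MonotoneOn (rho · K) (Set.Ico 0 ((K : ℝ) + 2)) := by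
  rintro α ⟨hα0, -⟩ β ⟨-, hβ⟩ hαβ
  have hβ' : 0 < 1 - β / ((K : ℝ) + 2) := by
    rw [sub_pos, div_lt_one (by positivity)]
    exact hβ
  show rho α K ≤ rho β K
  unfold rho
  gcongr
  exact pow_nonneg (hα0.trans hαβ) _

theorem mem_smul_Icc_neg_one_one {r c : ℝ} (h : |r| ≤ c) : r ∈ c • Set.Icc (-1 : ℝ) 1 := by
  rcases (abs_nonneg r |>.trans h).eq_or_lt with rfl | hc
  · rw [abs_nonpos_iff.1 h]
    exact ⟨0, ⟨by norm_num, by norm_num⟩, smul_zero 0⟩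
  · rw [LinearOrderedField.smul_Icc hc, mul_neg_one, mul_one]
    exact abs_le.1 h

section IntervalMatrix

variable {n : ℕ}

theorem memI_imul {M N : Matrix (Fin n) (Fin n) ℝ} {S T : IMat n}
    (hM : memI M S) (hN : memI N T) : memI (M * N) (imul S T) := fun i j =>
  (Set.mem_fintype_sum _ _).2
    ⟨fun k => M i k * N k j, fun k => Set.mem_image2_of_mem (hM i k) (hN k j), Matrix.mul_apply.symm⟩

theorem memI_iterate_sq (L : ℕ) {M : Matrix (Fin n) (Fin n) ℝ} {S : IMat n} (hM : memI M S) :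
    memI (M ^ 2 ^ L) ((fun T => imul T T)^[L] S) := by
  induction L generalizing M S with
  | zero => simpa using hM
  | succ L ih =>
    rw [Function.iterate_succ_apply, pow_succ', pow_mul, sq]
    exact ih (memI_imul hM hM)

theorem memI_hornerP {B : Matrix (Fin n) (Fin n) ℝ} {S : IMat n} (hB : memI B S) (K m : ℕ) :
    memI (hornerP B K m) (ihornerP S K m) := by
  induction m with
  | zero => exact fun i j => rfl
  | succ m ih =>
    intro i j
    exact Set.add_mem_add rfl (Set.smul_mem_smul_set (memI_imul hB ih i j))

theorem memI_ofBounds_smul {c : ℝ} (hc : 0 ≤ c) {lo hi M : Matrix (Fin n) (Fin n) ℝ}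
    (hM : memI M (ofBounds lo hi)) : memI (c • M) (ofBounds (c • lo) (c • hi)) := fun i j =>
  ⟨mul_le_mul_of_nonneg_left (hM i j).1 hc, mul_le_mul_of_nonneg_left (hM i j).2 hc⟩

theorem abs_apply_le_norm (M : Matrix (Fin n) (Fin n) ℝ) (i j : Fin n) : |M i j| ≤ ‖M‖ := by
  rw [← Real.norm_eq_abs, ← coe_nnnorm, ← coe_nnnorm M, NNReal.coe_le_coe,
    Matrix.linfty_opNNNorm_def]
  exact (Finset.single_le_sum (f := fun k => ‖M i k‖₊) (fun _ _ => zero_le)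
    (Finset.mem_univ j)).trans (Finset.le_sup (f := fun i => ∑ j, ‖M i j‖₊) (Finset.mem_univ i))

theorem norm_le_norm_of_abs_apply_le {M N : Matrix (Fin n) (Fin n) ℝ}
    (h : ∀ i j, |M i j| ≤ |N i j|) : ‖M‖ ≤ ‖N‖ := by
  rw [← coe_nnnorm, ← coe_nnnorm N, NNReal.coe_le_coe,
    Matrix.linfty_opNNNorm_def, Matrix.linfty_opNNNorm_def]
  refine Finset.sup_mono_fun fun i _ => Finset.sum_le_sum fun j _ => ?_
  rw [← NNReal.coe_le_coe, coe_nnnorm, coe_nnnorm, Real.norm_eq_abs, Real.norm_eq_abs]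
  exact h i j

theorem bddAbove_norm_ofBounds (lo hi : Matrix (Fin n) (Fin n) ℝ) :
    BddAbove ((fun M => ‖M‖) '' {A | memI A (ofBounds lo hi)}) := by
  refine ⟨‖Matrix.of fun i j => |lo i j| + |hi i j|‖, ?_⟩
  rintro _ ⟨M, hM, rfl⟩
  refine norm_le_norm_of_abs_apply_le fun i j => ?_
  rw [Matrix.of_apply, abs_of_nonneg (a := |lo i j| + |hi i j|) (by positivity)]
  exact (abs_le_max_abs_abs (hM i j).1 (hM i j).2).trans (max_le_add_of_nonneg
    (abs_nonneg _) (abs_nonneg _))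

theorem norm_le_intervalNorm {lo hi M : Matrix (Fin n) (Fin n) ℝ}
    (hM : memI M (ofBounds lo hi)) : ‖M‖ ≤ intervalNorm lo hi :=
  le_csSup (bddAbove_norm_ofBounds lo hi) ⟨M, hM, rfl⟩

theorem intervalNorm_smul {c : ℝ} (hc : 0 < c) (lo hi : Matrix (Fin n) (Fin n) ℝ) :
    intervalNorm (c • lo) (c • hi) = c * intervalNorm lo hi := by
  rw [intervalNorm, intervalNorm, ← smul_eq_mul, ← Real.sSup_smul_of_nonneg hc.le]
  congr 1
  ext x
  constructor
  · rintro ⟨M, hM, rfl⟩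
    have hM' := memI_ofBounds_smul (inv_nonneg.2 hc.le) hM
    rw [inv_smul_smul₀ hc.ne', inv_smul_smul₀ hc.ne'] at hM'
    refine ⟨_, ⟨c⁻¹ • M, hM', rfl⟩, ?_⟩
    show c • ‖c⁻¹ • M‖ = ‖M‖
    rw [norm_smul, smul_eq_mul, ← mul_assoc, Real.norm_of_nonneg (inv_nonneg.2 hc.le),
      mul_inv_cancel₀ hc.ne', one_mul]
  · rintro ⟨_, ⟨M, hM, rfl⟩, rfl⟩
    exact ⟨c • M, memI_ofBounds_smul hc.le hM, by
      show ‖c • M‖ = c • ‖M‖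
      rw [norm_smul, Real.norm_of_nonneg hc.le, smul_eq_mul]⟩

theorem expM_eq_exp (M : Matrix (Fin n) (Fin n) ℝ) : expM M = NormedSpace.exp M := by
  rw [NormedSpace.exp_eq_tsum ℝ]
  rfl

theorem expM_eq_pow_expM_inv_smul {N : ℕ} (hN : N ≠ 0) (M : Matrix (Fin n) (Fin n) ℝ) :
    expM M = expM ((N : ℝ)⁻¹ • M) ^ N := by
  conv_lhs => rw [← inv_smul_smul₀ (Nat.cast_ne_zero.2 hN : (N : ℝ) ≠ 0) M, smul_comm,
    Nat.cast_smul_eq_nsmul]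
  rw [expM_eq_exp, expM_eq_exp, Matrix.exp_nsmul]

theorem memI_expM_ihorner {lo hi B : Matrix (Fin n) (Fin n) ℝ} {K : ℕ}
    (hB : memI B (ofBounds lo hi)) (hK : intervalNorm lo hi < K + 2) :
    memI (expM B) (ihorner lo hi K) := by
  have hBν : ‖B‖ ≤ intervalNorm lo hi := norm_le_intervalNorm hB
  have hrem : ‖expM B - hornerP B K K‖ ≤ rho (intervalNorm lo hi) K := by
    rw [hornerP_self, expM_eq_exp]
    exact (norm_exp_sub_taylor_le B (hBν.trans_lt hK)).trans (rho_monotoneOn K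
      ⟨norm_nonneg B, hBν.trans_lt hK⟩ ⟨(norm_nonneg B).trans hBν, hK⟩ hBν)
  intro i j
  rw [← add_sub_cancel (hornerP B K K) (expM B)]
  exact Set.add_mem_add (memI_hornerP hB K K i j)
    (mem_smul_Icc_neg_one_one ((abs_apply_le_norm _ i j).trans hrem))

end IntervalMatrix

theorem scaling_squaring_interval_enclosure_general (n K L : ℕ)
    (Alo Ahi : Matrix (Fin n) (Fin n) ℝ)
    (hKL : intervalNorm Alo Ahi < ((K : ℝ) + 2) * 2 ^ L) :
    ∀ A : Matrix (Fin n) (Fin n) ℝ, (∀ i j, A i j ∈ Set.Icc (Alo i j) (Ahi i j)) →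
      memI (expM A)
        ((fun M => imul M M)^[L]
          (ihorner (((2 : ℝ) ^ L)⁻¹ • Alo) (((2 : ℝ) ^ L)⁻¹ • Ahi) K)) := by
  intro A hA
  have hscale : (0 : ℝ) < ((2 : ℝ) ^ L)⁻¹ := by positivity
  have hnorm : intervalNorm (((2 : ℝ) ^ L)⁻¹ • Alo) (((2 : ℝ) ^ L)⁻¹ • Ahi) < K + 2 := by
    rw [intervalNorm_smul hscale, inv_mul_lt_iff₀ (by positivity), mul_comm]
    exact hKL
  have hexp : expM A = expM (((2 : ℝ) ^ L)⁻¹ • A) ^ 2 ^ L := by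
    simpa using expM_eq_pow_expM_inv_smul (pow_ne_zero L two_ne_zero) A
  rw [hexp]
  exact memI_iterate_sq L (memI_expM_ihorner (memI_ofBounds_smul hscale.le hA) hnorm)

/-- Scaling and squaring enclosure theorem: if `(K+2)·2^L > ‖[A]‖` then for every
`A ∈ [A]`, `exp A` belongs to `[S]([A],L,K) := ([H]([A]/2^L, K))^(2^L)`, where the
power `2^L` is computed by `L` successive interval matrix squarings. -/
theorem scaling_squaring_interval_enclosure (n K L : ℕ)
    (Alo Ahi : Matrix (Fin n) (Fin n) ℝ)
    (hA : ∀ i j, Alo i j ≤ Ahi i j) (hK1 : 1 ≤ K)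
    (hKL : intervalNorm Alo Ahi < ((K : ℝ) + 2) * 2 ^ L) :
    ∀ A : Matrix (Fin n) (Fin n) ℝ, (∀ i j, A i j ∈ Set.Icc (Alo i j) (Ahi i j)) →
      memI (expM A)
        ((fun M => imul M M)^[L]
          (ihorner (((2 : ℝ) ^ L)⁻¹ • Alo) (((2 : ℝ) ^ L)⁻¹ • Ahi) K)) :=
  scaling_squaring_interval_enclosure_general n K L Alo Ahi hKL
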